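/- Let X be a T1 regular topological space and let f : 𝕊 → X be a continuous open surjection from the Sorgenfrey line onto X. If the weight of X is uncountable (X is not second countable), then there exists a closed subset of X that is homeomorphic to the Sorgenfrey line. -/

import Mathlib

open Set Filter Topology Function

/-- The Sorgenfrey line: the real line as a type synonym. -/
def SorgenfreyLine : Type := ℝ

notation "𝕊" => SorgenfreyLine

noncomputable instance : LinearOrder 𝕊 := inferInstanceAs (LinearOrder ℝ)
instance : RatCast 𝕊 := inferInstanceAs (RatCast ℝ)

/-- The topology on the Sorgenfrey line, generated by half-open intervals `[a, b)`, `a < b`. -/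
instance : TopologicalSpace 𝕊 :=
  TopologicalSpace.generateFrom {s : Set 𝕊 | ∃ a b : 𝕊, a < b ∧ s = Set.Ico a b}

/-!
Call `x ∈ X` bad if the images `f '' [q, q')` of rational intervals do not form a neighbourhood
base at `x`. If there were only countably many bad points, these images together with the sets
`f '' [s, q)`, `f s = x`, for bad `x` would form a countable base. The fibre of a bad point is
discrete from the right; taking its least point above a rational, we get a rational window
`W = [c, q)` in which uncountably many points are the only point of `W` in their fibre. As `f` is
open, the set `P` of such points is closed, `f` restricts to a homeomorphism from any subset of `P`
onto its image, and `f '' P` is closed in the open set `f '' W`.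

`𝕊` is hereditarily Lindelöf, hence so is `X`, and a regular hereditarily Lindelöf space is
perfectly normal. Writing `X \ (closure (f '' P) \ f '' W)` as a countable union of closed sets,
one of them cuts `P` in an uncountable closed set with closed image; its perfect kernel `D`
(Cantor–Bendixson) still has closed image `f '' D ≃ₜ D`. Finally, a nonempty perfect subset of `𝕊`
that is bounded below is order isomorphic to `[0, ∞)` (extend a back-and-forth isomorphism between
countable dense subsets by right limits), an order isomorphism between perfect subsets of `𝕊` is a
homeomorphism, and `[0, ∞) ≃ₜ 𝕊` by translating each `[n, n + 1)` to a distinct `[k, k + 1)`.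
-/

theorem HereditarilyLindelofSpace.exists_perfect_nonempty_of_isClosed_of_not_countable
    {α : Type*} [TopologicalSpace α] [HereditarilyLindelofSpace α] {C : Set α}
    (hC : IsClosed C) (hunc : ¬ C.Countable) : ∃ D, Perfect D ∧ D.Nonempty ∧ D ⊆ C := by
  let ι := {U : Set α // IsOpen U ∧ (U ∩ C).Countable}
  obtain ⟨t, htc, ht⟩ := eq_open_union_countable (fun U : ι => U.1) fun U => U.2.1
  have hV : ((⋃ U : ι, U.1) ∩ C).Countable := by
    rw [← ht, iUnion₂_inter]
    exact htc.biUnion fun U _ => U.2.2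
  refine ⟨C \ ⋃ U : ι, U.1, ⟨hC.sdiff (isOpen_iUnion fun U => U.2.1),
    preperfect_iff_nhds.2 fun x hx U hU => ?_⟩, ?_, sdiff_subset⟩
  · by_contra! h
    obtain ⟨W, hWU, hW, hxW⟩ := mem_nhds_iff.1 hU
    have hWC : (W ∩ C).Countable := Countable.mono (fun y hy => by
      by_cases hyV : y ∈ ⋃ U : ι, U.1
      · exact Or.inl ⟨hyV, hy.2⟩
      · exact Or.inr (h y ⟨hWU hy.1, hy.2, hyV⟩)) (hV.union (countable_singleton x))
    exact hx.2 (mem_iUnion.2 ⟨⟨W, hW, hWC⟩, hxW⟩)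
  · refine nonempty_iff_ne_empty.2 fun h => hunc (Countable.mono ?_ hV)
    exact fun y hy => ⟨sdiff_eq_empty.1 h hy, hy⟩

theorem Function.Surjective.hereditarilyLindelofSpace {X Y : Type*} [TopologicalSpace X]
    [TopologicalSpace Y] [HereditarilyLindelofSpace X] {f : X → Y} (hsurj : Surjective f)
    (hf : Continuous f) : HereditarilyLindelofSpace Y :=
  ⟨fun t _ => image_preimage_eq t hsurj ▸ (HereditarilyLindelofSpace.isLindelof _).image hf⟩

instance {X : Type*} [TopologicalSpace X] [RegularSpace X] [HereditarilyLindelofSpace X] :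
    PerfectlyNormalSpace X where
  toNormalSpace := NormalSpace.of_regularSpace_lindelofSpace
  closed_gdelta s hs := by
    choose N hN hNc hNs using fun x : (sᶜ : Set X) =>
      exists_mem_nhds_isClosed_subset (hs.isOpen_compl.mem_nhds x.2)
    obtain ⟨t, htc, ht⟩ :=
      eq_open_union_countable (fun x => interior (N x)) fun _ => isOpen_interior
    convert IsGδ.biInter_of_isOpen htc fun x _ => (hNc x).isOpen_compl
    refine Subset.antisymm (subset_iInter₂ fun x _ => subset_compl_comm.1 (hNs x)) fun y hy => ?_
    by_contra hys
    have : y ∈ ⋃ x ∈ t, interior (N x) :=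
      ht ▸ mem_iUnion.2 ⟨⟨y, hys⟩, mem_interior_iff_mem_nhds.2 (hN ⟨y, hys⟩)⟩
    obtain ⟨x, hxt, hyx⟩ := mem_iUnion₂.1 this
    exact mem_iInter₂.1 hy x hxt (interior_subset hyx)

theorem exists_isClosed_inter_not_countable {X : Type*} [TopologicalSpace X]
    [PerfectlyNormalSpace X] {Y O : Set X} (hO : IsOpen O) (hY : closure Y ∩ O = Y)
    (hunc : ¬ Y.Countable) : ∃ K, IsClosed K ∧ IsClosed (Y ∩ K) ∧ ¬ (Y ∩ K).Countable := by
  obtain ⟨T, hTo, hTc, hE⟩ := (isClosed_closure (s := Y)).sdiff hO |>.isGδ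
  have hYT : ∀ y ∈ Y, ∃ G ∈ T, y ∉ G := fun y hy => by
    by_contra! h
    have : y ∈ closure Y \ O := hE ▸ mem_sInter.2 h
    exact this.2 (hY.symm ▸ hy).2
  obtain ⟨G, hGT, hG⟩ : ∃ G ∈ T, ¬ (Y ∩ Gᶜ).Countable := by
    by_contra! h
    exact hunc ((hTc.biUnion h).mono fun y hy => by
      obtain ⟨G, hG, hyG⟩ := hYT y hy
      exact mem_iUnion₂.2 ⟨G, hG, hy, hyG⟩)
  refine ⟨Gᶜ, (hTo G hGT).isClosed_compl, ?_, hG⟩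
  -- `closure Y \ O ⊆ G`, so off `G` the set `Y` agrees with its closure
  convert isClosed_closure.inter (hTo G hGT).isClosed_compl using 1
  refine Subset.antisymm (inter_subset_inter_left _ subset_closure) fun y ⟨hyc, hyG⟩ => ⟨?_, hyG⟩
  refine hY ▸ ⟨hyc, not_not.1 fun hyO => hyG ?_⟩
  have : y ∈ ⋂₀ T := hE ▸ ⟨hyc, hyO⟩
  exact this G hGT

namespace SorgenfreyLine

noncomputable instance : Field 𝕊 := inferInstanceAs (Field ℝ)
instance : IsStrictOrderedRing 𝕊 := inferInstanceAs (IsStrictOrderedRing ℝ)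
noncomputable instance : FloorRing 𝕊 := inferInstanceAs (FloorRing ℝ)
noncomputable instance : ConditionallyCompleteLinearOrder 𝕊 :=
  inferInstanceAs (ConditionallyCompleteLinearOrder ℝ)

theorem isTopologicalBasis_Ico :
    TopologicalSpace.IsTopologicalBasis {s : Set 𝕊 | ∃ a b : 𝕊, a < b ∧ s = Ico a b} where
  exists_subset_inter := by
    rintro _ ⟨a, b, -, rfl⟩ _ ⟨a', b', -, rfl⟩ x ⟨hx, hx'⟩
    exact ⟨Ico x (min b b'), ⟨x, _, lt_min hx.2 hx'.2, rfl⟩, ⟨le_rfl, lt_min hx.2 hx'.2⟩,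
      fun y hy => ⟨⟨hx.1.trans hy.1, hy.2.trans_le (min_le_left _ _)⟩,
        ⟨hx'.1.trans hy.1, hy.2.trans_le (min_le_right _ _)⟩⟩⟩
  sUnion_eq := eq_univ_of_forall fun x => ⟨Ico x (x + 1), ⟨x, _, by linarith, rfl⟩, by simp⟩
  eq_generateFrom := rfl

theorem nhds_basis_Ico (a : 𝕊) : (𝓝 a).HasBasis (a < ·) (Ico a ·) := by
  refine isTopologicalBasis_Ico.nhds_hasBasis.to_hasBasis ?_ fun b hab =>
    ⟨Ico a b, ⟨⟨a, b, hab, rfl⟩, left_mem_Ico.2 hab⟩, subset_rfl⟩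
  rintro _ ⟨⟨c, d, -, rfl⟩, hac, had⟩
  exact ⟨d, had, Ico_subset_Ico_left hac⟩

theorem isOpen_Ico (a b : 𝕊) : IsOpen (Ico a b) :=
  isOpen_iff_mem_nhds.2 fun _ hx => (nhds_basis_Ico _).mem_of_superset hx.2
    (Ico_subset_Ico_left hx.1)

theorem isOpen_Ici (a : 𝕊) : IsOpen (Ici a) :=
  isOpen_iff_mem_nhds.2 fun x hx => mem_of_superset ((isOpen_Ico x (x + 1)).mem_nhds
    ⟨le_rfl, by linarith⟩) fun _ hy => le_trans hx hy.1

theorem isOpen_Iio (a : 𝕊) : IsOpen (Iio a) :=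
  isOpen_iff_mem_nhds.2 fun x hx => mem_of_superset ((isOpen_Ico x a).mem_nhds ⟨le_rfl, hx⟩)
    fun _ hy => hy.2

theorem isClosed_Ici (a : 𝕊) : IsClosed (Ici a) := by
  simpa using (isOpen_Iio a).isClosed_compl

theorem isClosed_Ico (a b : 𝕊) : IsClosed (Ico a b) := by
  rw [← Ici_inter_Iio]
  exact (isClosed_Ici a).inter (by simpa using (isOpen_Ici b).isClosed_compl)

instance : T2Space 𝕊 := by
  refine t2Space_iff_disjoint_nhds.2 fun x y hxy => ?_
  wlog h : x < y generalizing x y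
  · exact (this y x hxy.symm (hxy.lt_or_gt.resolve_left h)).symm
  refine disjoint_of_disjoint_of_mem ?_ ((isOpen_Ico x y).mem_nhds ⟨le_rfl, h⟩)
    ((isOpen_Ici y).mem_nhds self_mem_Ici)
  exact disjoint_left.2 fun z hz hz' => (not_le.2 hz.2) hz'

theorem mem_closure_of_isGLB {s : Set 𝕊} {a : 𝕊} (h : IsGLB s a) : a ∈ closure s :=
  (mem_closure_iff_nhds_basis (nhds_basis_Ico a)).2 fun _ hab => h.exists_between hab

theorem csInf_mem_of_isClosed {s : Set 𝕊} (hs : IsClosed s) (hne : s.Nonempty)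
    (hbdd : BddBelow s) : sInf s ∈ s :=
  by simpa only [hs.closure_eq] using mem_closure_of_isGLB (isGLB_csInf hne hbdd)

theorem preperfect_iff {C : Set 𝕊} :
    Preperfect C ↔ ∀ x ∈ C, ∀ b, x < b → ∃ y ∈ C, x < y ∧ y < b := by
  refine preperfect_iff_nhds.trans <| forall₂_congr fun x _ => ?_
  refine ⟨fun h b hxb => ?_, fun h U hU => ?_⟩
  · obtain ⟨y, ⟨hy, hyC⟩, hyx⟩ := h _ ((isOpen_Ico x b).mem_nhds ⟨le_rfl, hxb⟩)
    exact ⟨y, hyC, lt_of_le_of_ne hy.1 hyx.symm, hy.2⟩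
  · obtain ⟨b, hxb, hb⟩ := (nhds_basis_Ico x).mem_iff.1 hU
    obtain ⟨y, hyC, hxy, hyb⟩ := h b hxb
    exact ⟨y, ⟨hb ⟨hxy.le, hyb⟩, hyC⟩, hxy.ne'⟩

theorem countable_of_forall_Ioo_disjoint {E : Set 𝕊}
    (h : ∀ x ∈ E, ∃ b, x < b ∧ Disjoint (Ioo x b) E) : E.Countable := by
  choose! b hxb hb using h
  choose! q hq using fun x (hx : x ∈ E) => exists_rat_btwn (hxb x hx)
  refine (mapsTo_univ q E).countable_of_injOn (fun x hx y hy hxy => ?_) countable_univ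
  by_contra hne
  wlog h : x < y generalizing x y
  · exact this y hy x hx hxy.symm (Ne.symm hne) (lt_of_le_of_ne (not_lt.1 h) (Ne.symm hne))
  refine disjoint_left.1 (hb x hx) ⟨h, ?_⟩ hy
  calc y < q y := (hq y hy).1
    _ = q x := by rw [hxy]
    _ < b x := (hq x hx).2

theorem exists_countable_biUnion_Ioo_eq (A : Set 𝕊) (b : 𝕊 → 𝕊) :
    ∃ T ⊆ A, T.Countable ∧ ⋃ x ∈ T, Ioo x (b x) = ⋃ x ∈ A, Ioo x (b x) := by
  choose! c hcA hc using fun (p : ℚ × ℚ) (h : ∃ x ∈ A, Ioo (p.1 : 𝕊) p.2 ⊆ Ioo x (b x)) => h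
  set P := {p : ℚ × ℚ | ∃ x ∈ A, Ioo (p.1 : 𝕊) p.2 ⊆ Ioo x (b x)}
  refine ⟨c '' P, image_subset_iff.2 hcA, P.to_countable.image c,
    (biUnion_subset_biUnion_left (image_subset_iff.2 hcA)).antisymm ?_⟩
  simp only [iUnion_subset_iff]
  intro x hx y hy
  obtain ⟨q, hxq, hqy⟩ := exists_rat_btwn hy.1
  obtain ⟨q', hyq', hq'b⟩ := exists_rat_btwn hy.2
  have hp : (q, q') ∈ P := ⟨x, hx, Ioo_subset_Ioo hxq.le hq'b.le⟩
  exact mem_biUnion (mem_image_of_mem c hp) (hc _ hp ⟨hqy, hyq'⟩)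

theorem exists_countable_iUnion_eq {ι : Type*} (U : ι → Set 𝕊) (hU : ∀ i, IsOpen (U i)) :
    ∃ t : Set ι, t.Countable ∧ ⋃ i ∈ t, U i = ⋃ i, U i := by
  cases isEmpty_or_nonempty ι
  · exact ⟨∅, countable_empty, by simp⟩
  set V := ⋃ i, U i
  have : ∀ x ∈ V, ∃ j b, x < b ∧ Ico x b ⊆ U j := fun x hx => by
    obtain ⟨j, hj⟩ := mem_iUnion.1 hx
    obtain ⟨b, hxb, hb⟩ := (nhds_basis_Ico x).mem_iff.1 ((hU j).mem_nhds hj)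
    exact ⟨j, b, hxb, hb⟩
  choose! idx b hxb hb using this
  obtain ⟨T, hTV, hTc, hT⟩ := exists_countable_biUnion_Ioo_eq V b
  set E := V \ ⋃ x ∈ V, Ioo x (b x)
  have hE : E.Countable := countable_of_forall_Ioo_disjoint fun x hx =>
    ⟨b x, hxb x hx.1, disjoint_left.2 fun y hy hyE => hyE.2 (mem_biUnion hx.1 hy)⟩
  refine ⟨idx '' (T ∪ E), (hTc.union hE).image idx,
    (iUnion₂_subset fun _ _ => subset_iUnion _ _).antisymm fun y hy => ?_⟩
  rw [biUnion_image]
  by_cases hyE : y ∈ E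
  · exact mem_biUnion (Or.inr hyE) (hb y hyE.1 ⟨le_rfl, hxb y hyE.1⟩)
  · have hyT : y ∈ ⋃ x ∈ T, Ioo x (b x) := by
      rw [hT]; exact not_not.1 fun h => hyE ⟨hy, h⟩
    obtain ⟨x, hxT, hyx⟩ := mem_iUnion₂.1 hyT
    exact mem_biUnion (Or.inl hxT) (hb x (hTV hxT) (Ioo_subset_Ico_self hyx))

instance : HereditarilyLindelofSpace 𝕊 :=
  HereditarilyLindelofSpace.of_forall_isOpen fun _ _ =>
    isLindelof_of_countable_subcover fun U hU hsU => by
      obtain ⟨t, htc, ht⟩ := exists_countable_iUnion_eq U hU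
      exact ⟨t, htc, ht ▸ hsU⟩

theorem Ico_mem_nhds_subtype {A : Set 𝕊} {a c : A} (h : a < c) : Ico a c ∈ 𝓝 a := by
  have : Ico a c = Subtype.val ⁻¹' Ico (a : 𝕊) c := by ext; simp
  rw [this]
  exact (isOpen_Ico _ _).preimage continuous_subtype_val |>.mem_nhds ⟨le_rfl, h⟩

theorem nhds_subtype_basis_Ico {A : Set 𝕊} (hA : Preperfect A) (a : A) :
    (𝓝 a).HasBasis (a < ·) (Ico a ·) := by
  rw [nhds_subtype]
  refine ((nhds_basis_Ico (a : 𝕊)).comap Subtype.val).to_hasBasis (fun b hab => ?_)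
    fun c hac => ⟨c, hac, fun x hx => ⟨hx.1, hx.2⟩⟩
  obtain ⟨y, hyA, hay, hyb⟩ := preperfect_iff.1 hA a a.2 b hab
  exact ⟨⟨y, hyA⟩, hay, fun x hx => ⟨hx.1, (show (x : 𝕊) < y from hx.2).trans hyb⟩⟩

theorem continuous_orderIso {A B : Set 𝕊} (hB : Preperfect B) (e : A ≃o B) : Continuous e :=
  continuous_iff_continuousAt.2 fun a => (nhds_subtype_basis_Ico hB (e a)).tendsto_right_iff.2
    fun _ hab => mem_of_superset (Ico_mem_nhds_subtype (e.lt_symm_apply.2 hab)) fun _ hx =>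
      ⟨e.monotone hx.1, e.lt_symm_apply.1 hx.2⟩

def homeomorphOfOrderIso {A B : Set 𝕊} (hA : Preperfect A) (hB : Preperfect B) (e : A ≃o B) :
    A ≃ₜ B where
  toEquiv := e.toEquiv
  continuous_toFun := continuous_orderIso hB e
  continuous_invFun := continuous_orderIso hA e.symm

theorem continuous_add_const (c : 𝕊) : Continuous (· + c) := by
  refine continuous_generateFrom_iff.2 ?_
  rintro _ ⟨a, b, -, rfl⟩
  have : (· + c) ⁻¹' Ico a b = Ico (a - c) (b - c) := by
    ext; simp [lt_sub_iff_add_lt]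
  exact this ▸ isOpen_Ico _ _

theorem eventually_floor_eq (x : 𝕊) : ∀ᶠ y in 𝓝 x, ⌊y⌋ = ⌊x⌋ :=
  mem_of_superset ((isOpen_Ico x (⌊x⌋ + 1)).mem_nhds ⟨le_rfl, Int.lt_floor_add_one x⟩)
    fun _ hy => Int.floor_eq_iff.2 ⟨(Int.floor_le x).trans hy.1, hy.2⟩

theorem continuous_fract_add (g : ℤ → 𝕊) : Continuous fun y : 𝕊 => Int.fract y + g ⌊y⌋ :=
  continuous_iff_continuousAt.2 fun x =>
    (continuous_add_const (g ⌊x⌋ - ⌊x⌋)).continuousAt.congr_of_eventuallyEq <|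
      (eventually_floor_eq x).mono fun y hy => by simp only [Int.fract, hy]; ring

noncomputable def foldHomeomorph : 𝕊 ≃ₜ Ici (0 : 𝕊) where
  toFun x := ⟨Int.fract x + (Equiv.intEquivNat ⌊x⌋ : 𝕊),
    add_nonneg (Int.fract_nonneg x) (Nat.cast_nonneg _)⟩
  invFun y := Int.fract (y : 𝕊) + (Equiv.intEquivNat.symm ⌊(y : 𝕊)⌋.toNat : 𝕊)
  left_inv x := by
    simp [Int.floor_add_natCast, Int.fract_add_natCast, Int.fract_add_floor]
  right_inv := by
    rintro ⟨y, hy : 0 ≤ y⟩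
    ext
    simp only [Int.floor_add_intCast, Int.fract_add_intCast, Int.floor_fract, Int.fract_fract,
      zero_add, Equiv.apply_symm_apply]
    rw [← Int.cast_natCast, Int.toNat_of_nonneg (Int.floor_nonneg.2 hy), Int.fract_add_floor]
  continuous_toFun := (continuous_fract_add fun n => (Equiv.intEquivNat n : 𝕊)).subtype_mk _
  continuous_invFun := (continuous_fract_add fun n =>
    (Equiv.intEquivNat.symm n.toNat : 𝕊)).comp continuous_subtype_val

theorem exists_countable_dense_subset {B : Set 𝕊} (hB : Preperfect B) :
    ∃ D ⊆ B, D.Countable ∧ ∀ x ∈ B, ∀ y, x < y → ∃ z ∈ D, x < z ∧ z < y := by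
  choose! c hc using fun (p : ℚ × ℚ) (h : (B ∩ Ioo (p.1 : 𝕊) p.2).Nonempty) => h
  set P := {p : ℚ × ℚ | (B ∩ Ioo (p.1 : 𝕊) p.2).Nonempty}
  refine ⟨c '' P, image_subset_iff.2 fun p hp => (hc p hp).1, P.to_countable.image c,
    fun x hx y hxy => ?_⟩
  obtain ⟨x', hx'B, hxx', hx'y⟩ := preperfect_iff.1 hB x hx y hxy
  obtain ⟨q, hxq, hqx'⟩ := exists_rat_btwn hxx'
  obtain ⟨q', hx'q', hq'y⟩ := exists_rat_btwn hx'y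
  have hp : (q, q') ∈ P := ⟨x', hx'B, hqx', hx'q'⟩
  exact ⟨c (q, q'), mem_image_of_mem c hp, hxq.trans (hc _ hp).2.1, (hc _ hp).2.2.trans hq'y⟩

theorem exists_orderIso_rat_Ioi {B : Set 𝕊} (hB : IsClosed B) (hBp : Preperfect B)
    (hne : B.Nonempty) (hbdd : BddBelow B) :
    ∃ D ⊆ B, (∀ x ∈ B, ∀ y, x < y → ∃ z ∈ D, x < z ∧ z < y) ∧ Nonempty (Ioi (0 : ℚ) ≃o D) := by
  obtain ⟨D, hDB, hDc, hD⟩ := exists_countable_dense_subset hBp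
  have hb₀ : sInf B ∈ B := csInf_mem_of_isClosed hB hne hbdd
  -- removing the least point of `B` leaves a dense order without endpoints
  set D' := D ∩ Ioi (sInf B)
  have hD' : ∀ x ∈ B, ∀ y, x < y → ∃ z ∈ D', x < z ∧ z < y := fun x hx y hxy => by
    obtain ⟨z, hzD, hxz, hzy⟩ := hD x hx y hxy
    exact ⟨z, ⟨hzD, (csInf_le hbdd hx).trans_lt hxz⟩, hxz, hzy⟩
  have : Countable D' := (hDc.mono inter_subset_left).to_subtype
  have : Nonempty D' := by
    obtain ⟨z, hz, -⟩ := hD' _ hb₀ _ (lt_add_one (sInf B))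
    exact ⟨⟨z, hz⟩⟩
  have : DenselyOrdered D' := ⟨fun a b hab => by
    obtain ⟨z, hz, hz'⟩ := hD' a (hDB a.2.1) b hab
    exact ⟨⟨z, hz⟩, hz'⟩⟩
  have : NoMaxOrder D' := ⟨fun a => by
    obtain ⟨z, hz, hz', -⟩ := hD' a (hDB a.2.1) _ (lt_add_one (a : 𝕊))
    exact ⟨⟨z, hz⟩, hz'⟩⟩
  have : NoMinOrder D' := ⟨fun a => by
    obtain ⟨z, hz, -, hz'⟩ := hD' _ hb₀ a a.2.2
    exact ⟨⟨z, hz⟩, hz'⟩⟩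
  exact ⟨D', inter_subset_left.trans hDB, hD', Order.iso_of_countable_dense _ _⟩

section Extension

variable {D : Set 𝕊} (e : Ioi (0 : ℚ) ≃o D)

noncomputable def extendRight (x : 𝕊) : 𝕊 :=
  sInf ((fun p => (e p : 𝕊)) '' {p | x < ((p : ℚ) : 𝕊)})

variable {e}

theorem exists_rat_Ioi_gt {x : 𝕊} (hx : 0 ≤ x) : ∃ p : Ioi (0 : ℚ), x < ((p : ℚ) : 𝕊) := by
  obtain ⟨q, hxq, -⟩ := exists_rat_btwn (lt_add_one x)
  exact ⟨⟨q, by exact_mod_cast hx.trans_lt hxq⟩, hxq⟩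

theorem extendRight_le (hD : BddBelow D) {x : 𝕊} {p : Ioi (0 : ℚ)} (hp : x < ((p : ℚ) : 𝕊)) :
    extendRight e x ≤ e p :=
  csInf_le (hD.mono (by rintro _ ⟨q, -, rfl⟩; exact (e q).2)) ⟨p, hp, rfl⟩

theorem le_extendRight {x : 𝕊} (hx : 0 ≤ x) {p : Ioi (0 : ℚ)} (hp : ((p : ℚ) : 𝕊) ≤ x) :
    (e p : 𝕊) ≤ extendRight e x := by
  obtain ⟨q, hq⟩ := exists_rat_Ioi_gt hx
  refine le_csInf ⟨_, q, hq, rfl⟩ ?_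
  rintro _ ⟨q', hq', rfl⟩
  exact e.monotone (by exact_mod_cast hp.trans hq'.le)

theorem extendRight_strictMonoOn (hD : BddBelow D) : StrictMonoOn (extendRight e) (Ici 0) := by
  intro x hx y _ hxy
  obtain ⟨q, hxq, hqy⟩ := exists_rat_btwn hxy
  obtain ⟨q', hqq', hq'y⟩ := exists_rat_btwn hqy
  have hq : (0 : ℚ) < q := by exact_mod_cast (show (0 : 𝕊) ≤ x from hx).trans_lt hxq
  have hq' : (0 : ℚ) < q' := hq.trans (by exact_mod_cast hqq')
  calc extendRight e x ≤ e ⟨q, hq⟩ := extendRight_le hD hxq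
    _ < e ⟨q', hq'⟩ := e.strictMono (by exact_mod_cast hqq')
    _ ≤ extendRight e y := le_extendRight (hx.trans hxy.le) hq'y.le

theorem extendRight_mem {B : Set 𝕊} (hB : IsClosed B) (hbdd : BddBelow B) (hDB : D ⊆ B)
    {x : 𝕊} (hx : 0 ≤ x) : extendRight e x ∈ B := by
  have hsub : (fun p => (e p : 𝕊)) '' {p | x < ((p : ℚ) : 𝕊)} ⊆ B := by
    rintro _ ⟨p, -, rfl⟩; exact hDB (e p).2
  obtain ⟨p, hp⟩ := exists_rat_Ioi_gt hx
  exact hB.closure_subset_iff.2 hsub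
    (mem_closure_of_isGLB (isGLB_csInf ⟨_, p, hp, rfl⟩ (hbdd.mono hsub)))

theorem exists_extendRight_eq {B : Set 𝕊}
    (hdense : ∀ x ∈ B, ∀ y, x < y → ∃ z ∈ D, x < z ∧ z < y) {b : 𝕊} (hb : b ∈ B) :
    ∃ x : 𝕊, 0 ≤ x ∧ extendRight e x = b := by
  set U := {p : Ioi (0 : ℚ) | b < e p}
  have hU : ∀ y, b < y → ∃ p ∈ U, (e p : 𝕊) < y := fun y hby => by
    obtain ⟨z, hz, hbz, hzy⟩ := hdense b hb y hby
    exact ⟨e.symm ⟨z, hz⟩, by simpa [U] using hbz, by simpa using hzy⟩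
  obtain ⟨p₀, hp₀, -⟩ := hU _ (lt_add_one b)
  set S := (fun p : Ioi (0 : ℚ) => ((p : ℚ) : 𝕊)) '' U
  have hS0 : ∀ s ∈ S, 0 ≤ s := by rintro _ ⟨p, -, rfl⟩; exact Rat.cast_nonneg.2 (le_of_lt p.2)
  -- `U` is an up-set without least element, so it is exactly the set of rationals above `inf U`
  have hUeq : {p : Ioi (0 : ℚ) | sInf S < ((p : ℚ) : 𝕊)} = U := by
    ext p
    refine ⟨fun hp => ?_, fun hp => ?_⟩
    · obtain ⟨_, ⟨p', hp', rfl⟩, hlt⟩ :=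
        exists_lt_of_csInf_lt (s := S) ⟨_, mem_image_of_mem _ hp₀⟩ hp
      exact (show b < e p' from hp').trans (e.strictMono (Rat.cast_lt.1 hlt))
    · obtain ⟨p', hp', hlt⟩ := hU _ hp
      exact (csInf_le ⟨0, hS0⟩ (mem_image_of_mem _ hp')).trans_lt
        (by exact_mod_cast e.lt_iff_lt.1 hlt)
  refine ⟨sInf S, le_csInf ⟨_, mem_image_of_mem _ hp₀⟩ hS0, ?_⟩
  rw [extendRight, hUeq]
  refine IsGLB.csInf_eq ⟨?_, fun c hc => not_lt.1 fun hbc => ?_⟩ ⟨_, mem_image_of_mem _ hp₀⟩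
  · rintro _ ⟨p, hp, rfl⟩; exact hp.le
  · obtain ⟨p, hp, hpc⟩ := hU c hbc
    exact (hc (mem_image_of_mem _ hp)).not_gt hpc

end Extension

theorem nonempty_orderIso_Ici_zero {B : Set 𝕊} (hB : IsClosed B) (hBp : Preperfect B)
    (hne : B.Nonempty) (hbdd : BddBelow B) : Nonempty (Ici (0 : 𝕊) ≃o B) := by
  obtain ⟨D, hDB, hD, ⟨e⟩⟩ := exists_orderIso_rat_Ioi hB hBp hne hbdd
  refine ⟨StrictMono.orderIsoOfSurjective
    (fun x => ⟨extendRight e x, extendRight_mem hB hbdd hDB x.2⟩)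
    (fun x y hxy => extendRight_strictMonoOn (hbdd.mono hDB) x.2 y.2 hxy) fun b => ?_⟩
  obtain ⟨x, hx, hxb⟩ := exists_extendRight_eq hD b.2
  exact ⟨⟨x, hx⟩, Subtype.ext hxb⟩

theorem preperfect_Ici (a : 𝕊) : Preperfect (Ici a) :=
  preperfect_iff.2 fun x hx b hxb =>
    ⟨(x + b) / 2, mem_Ici.2 (hx.trans (by linarith)), by linarith, by linarith⟩

theorem nonempty_homeomorph_of_perfect {B : Set 𝕊} (hB : Perfect B) (hne : B.Nonempty)
    (hbdd : BddBelow B) : Nonempty (B ≃ₜ 𝕊) := by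
  obtain ⟨e⟩ := nonempty_orderIso_Ici_zero hB.closed hB.acc hne hbdd
  exact ⟨(homeomorphOfOrderIso (preperfect_Ici 0) hB.acc e).symm.trans foldHomeomorph.symm⟩

section Fibers

variable {X : Type*} {f : 𝕊 → X}

def fiberUniqueIn (f : 𝕊 → X) (W : Set 𝕊) : Set 𝕊 := {t ∈ W | ∀ w ∈ W, f w = f t → w = t}

theorem injOn_fiberUniqueIn (W : Set 𝕊) : InjOn f (fiberUniqueIn f W) :=
  fun _ ha _ hb hab => hb.2 _ ha.1 hab

theorem image_inter_image_of_subset_fiberUniqueIn {W B V : Set 𝕊} (hB : B ⊆ fiberUniqueIn f W)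
    (hV : V ⊆ W) : f '' V ∩ f '' B = f '' (V ∩ B) := by
  refine Subset.antisymm ?_ (image_inter_subset _ _ _)
  rintro _ ⟨⟨v, hv, rfl⟩, b, hb, hfb⟩
  exact ⟨v, ⟨hv, (hB hb).2 v (hV hv) hfb.symm ▸ hb⟩, rfl⟩

variable [TopologicalSpace X]

theorem isClosed_fiberUniqueIn (hf : Continuous f) (hopen : IsOpenMap f) {W : Set 𝕊}
    (hWo : IsOpen W) (hWc : IsClosed W) : IsClosed (fiberUniqueIn f W) := by
  refine closure_subset_iff_isClosed.1 fun u hu =>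
    ⟨hWc.closure_subset_iff.2 (fun _ ht => ht.1) hu, fun w hw hfw => ?_⟩
  by_contra hne
  obtain ⟨N, M, hN, hM, hNM⟩ := t2_separation_nhds hne
  have hfN : f '' (N ∩ W) ∈ 𝓝 (f u) := hfw ▸ hopen.image_mem_nhds (inter_mem hN (hWo.mem_nhds hw))
  obtain ⟨t, ⟨htM, n, hn, hnt⟩, htS⟩ :=
    mem_closure_iff_nhds.1 hu _ (inter_mem hM (hf.continuousAt.preimage_mem_nhds hfN))
  exact disjoint_left.1 hNM (htS.2 n hn.2 hnt ▸ hn.1) htM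

theorem closure_image_inter_image (hopen : IsOpenMap f) {W B : Set 𝕊} (hW : IsOpen W)
    (hBc : IsClosed B) (hB : B ⊆ fiberUniqueIn f W) : closure (f '' B) ∩ f '' W = f '' B := by
  refine Subset.antisymm ?_ fun y hy => ⟨subset_closure hy, image_mono (fun b hb => (hB hb).1) hy⟩
  rintro _ ⟨hcl, u, hu, rfl⟩
  refine mem_image_of_mem f (hBc.closure_subset (mem_closure_iff_nhds.2 fun N hN => ?_))
  obtain ⟨_, hy⟩ := mem_closure_iff_nhds.1 hcl _
    (hopen.image_mem_nhds (inter_mem hN (hW.mem_nhds hu)))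
  rw [image_inter_image_of_subset_fiberUniqueIn hB inter_subset_right] at hy
  obtain ⟨n, ⟨⟨hnN, -⟩, hnB⟩, -⟩ := hy
  exact ⟨n, hnN, hnB⟩

theorem isClosed_image_of_subset_fiberUniqueIn (hopen : IsOpenMap f) {W B B' : Set 𝕊}
    (hW : IsOpen W) (hB : B ⊆ fiberUniqueIn f W) (hfB : IsClosed (f '' B)) (hB' : IsClosed B')
    (hB'B : B' ⊆ B) : IsClosed (f '' B') := by
  convert hfB.inter (isClosed_closure (s := f '' B')) using 1
  refine Subset.antisymm (fun y hy => ⟨image_mono hB'B hy, subset_closure hy⟩)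
    fun y ⟨hyB, hycl⟩ => ?_
  rw [← closure_image_inter_image hopen hW hB' (hB'B.trans hB)]
  exact ⟨hycl, image_mono (fun b hb => (hB hb).1) hyB⟩

noncomputable def homeomorphImage (hf : Continuous f) (hopen : IsOpenMap f) {W B : Set 𝕊}
    (hW : IsOpen W) (hB : B ⊆ fiberUniqueIn f W) : B ≃ₜ f '' B :=
  (Equiv.ofBijective (B.imageFactorization f)
    ⟨fun a b hab => Subtype.ext
      (injOn_fiberUniqueIn W (hB a.2) (hB b.2) (congrArg Subtype.val hab)),
      imageFactorization_surjective⟩).toHomeomorphOfContinuousOpen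
    ((hf.comp continuous_subtype_val).subtype_mk _) fun U hU => by
      obtain ⟨V, hV, rfl⟩ := isOpen_induced_iff.1 hU
      refine isOpen_induced_iff.2 ⟨f '' (V ∩ W), hopen _ (hV.inter hW), ?_⟩
      ext ⟨y, hy⟩
      refine ⟨fun ⟨v, ⟨hvV, hvW⟩, hfv⟩ => ?_, fun ⟨⟨b, hb⟩, hbV, hfb⟩ =>
        ⟨b, ⟨hbV, (hB hb).1⟩, congrArg Subtype.val hfb⟩⟩
      obtain ⟨b, hb, rfl⟩ := hy
      exact ⟨⟨b, hb⟩, (hB hb).2 v hvW hfv ▸ hvV, rfl⟩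

def badPoints (f : 𝕊 → X) : Set X :=
  {x | ∃ U ∈ 𝓝 x, ∀ q q' : ℚ, x ∈ f '' Ico (q : 𝕊) q' → ¬ f '' Ico (q : 𝕊) q' ⊆ U}

theorem secondCountableTopology_of_countable_badPoints (hf : Continuous f)
    (hopen : IsOpenMap f) (hsurj : Surjective f) (h : (badPoints f).Countable) :
    SecondCountableTopology X := by
  choose s hs using hsurj
  refine (TopologicalSpace.isTopologicalBasis_of_isOpen_of_nhds
    (s := range (fun p : ℚ × ℚ => f '' Ico (p.1 : 𝕊) p.2) ∪
      ⋃ x ∈ badPoints f, range fun q : ℚ => f '' Ico (s x) q) ?_ ?_).secondCountableTopology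
    ((countable_range _).union (h.biUnion fun _ _ => countable_range _))
  · rintro _ (⟨p, rfl⟩ | hu)
    · exact hopen _ (isOpen_Ico _ _)
    · obtain ⟨x, -, q, rfl⟩ := mem_iUnion₂.1 hu
      exact hopen _ (isOpen_Ico _ _)
  · intro x U hxU hU
    by_cases hx : x ∈ badPoints f
    · obtain ⟨b, hb, hbU⟩ := (nhds_basis_Ico (s x)).mem_iff.1
        (hf.continuousAt.preimage_mem_nhds ((hs x).symm ▸ hU.mem_nhds hxU))
      obtain ⟨q, hq, hqb⟩ := exists_rat_btwn hb
      refine ⟨f '' Ico (s x) q, Or.inr (mem_iUnion₂.2 ⟨x, hx, q, rfl⟩), ⟨s x, ⟨le_rfl, hq⟩, hs x⟩,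
        image_subset_iff.2 fun y hy => hbU ⟨hy.1, hy.2.trans hqb⟩⟩
    · simp only [badPoints, mem_ofPred_eq, not_exists, not_and, not_forall, not_not] at hx
      obtain ⟨q, q', hxq, hsub⟩ := hx U (hU.mem_nhds hxU)
      exact ⟨_, Or.inl ⟨(q, q'), rfl⟩, hxq, hsub⟩

theorem exists_forall_Ioo_ne_of_mem_badPoints (hf : Continuous f) {x : X} (hx : x ∈ badPoints f)
    {t : 𝕊} (ht : f t = x) : ∃ b, t < b ∧ ∀ w ∈ Ioo t b, f w ≠ x := by
  obtain ⟨U, hU, hbad⟩ := hx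
  obtain ⟨b, htb, hb⟩ := (nhds_basis_Ico t).mem_iff.1
    (hf.continuousAt.preimage_mem_nhds (ht ▸ hU))
  refine ⟨b, htb, fun w hw hfw => ?_⟩
  obtain ⟨q, htq, hqw⟩ := exists_rat_btwn hw.1
  obtain ⟨q', hwq', hq'b⟩ := exists_rat_btwn hw.2
  exact hbad q q' ⟨w, ⟨hqw.le, hwq'⟩, hfw⟩
    (image_subset_iff.2 fun y hy => hb ⟨htq.le.trans hy.1, hy.2.trans hq'b⟩)

theorem exists_mem_image_fiberUniqueIn [T1Space X] (hf : Continuous f) {x : X}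
    (hx : x ∈ badPoints f) (hxf : x ∈ range f) :
    ∃ c q : ℚ, x ∈ f '' fiberUniqueIn f (Ico (c : 𝕊) q) := by
  obtain ⟨s, hs⟩ := hxf
  obtain ⟨c, -, hcs⟩ := exists_rat_btwn (sub_one_lt s)
  set F := f ⁻¹' {x} ∩ Ici (c : 𝕊)
  have hFbdd : BddBelow F := ⟨c, fun _ h => h.2⟩
  have hm : sInf F ∈ F := csInf_mem_of_isClosed
    ((isClosed_singleton.preimage hf).inter (isClosed_Ici _)) ⟨s, hs, hcs.le⟩ hFbdd
  obtain ⟨b, hmb, hb⟩ := exists_forall_Ioo_ne_of_mem_badPoints hf hx hm.1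
  obtain ⟨q, hmq, hqb⟩ := exists_rat_btwn hmb
  refine ⟨c, q, sInf F, ⟨⟨hm.2, hmq⟩, fun w hw hfw => ?_⟩, hm.1⟩
  exact le_antisymm (not_lt.1 fun hlt => hb w ⟨hlt, hw.2.trans hqb⟩ (hfw.trans hm.1))
    (csInf_le hFbdd ⟨hfw.trans hm.1, hw.1⟩)

theorem exists_not_countable_fiberUniqueIn [T1Space X] (hf : Continuous f)
    (hopen : IsOpenMap f) (hsurj : Surjective f) (hw : ¬ SecondCountableTopology X) :
    ∃ c q : ℚ, ¬ (fiberUniqueIn f (Ico (c : 𝕊) q)).Countable := by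
  by_contra! h
  refine hw (secondCountableTopology_of_countable_badPoints hf hopen hsurj ?_)
  refine Countable.mono (fun x hx => ?_)
    ((countable_univ (α := ℚ × ℚ)).biUnion fun p _ => (h p.1 p.2).image f)
  obtain ⟨c, q, hcq⟩ := exists_mem_image_fiberUniqueIn hf hx (hsurj x)
  exact mem_iUnion₂.2 ⟨(c, q), mem_univ _, hcq⟩

theorem exists_isClosed_not_countable_isClosed_image [PerfectlyNormalSpace X] (hf : Continuous f)
    (hopen : IsOpenMap f) {W : Set 𝕊} (hWo : IsOpen W) (hWc : IsClosed W)
    (hunc : ¬ (fiberUniqueIn f W).Countable) :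
    ∃ B ⊆ fiberUniqueIn f W, IsClosed B ∧ ¬ B.Countable ∧ IsClosed (f '' B) := by
  have hP := isClosed_fiberUniqueIn hf hopen hWo hWc
  obtain ⟨K, hK, hPK, hunc'⟩ := exists_isClosed_inter_not_countable (hopen W hWo)
    (closure_image_inter_image hopen hWo hP subset_rfl)
    fun h => hunc (countable_of_injective_of_countable_image (injOn_fiberUniqueIn W) h)
  refine ⟨fiberUniqueIn f W ∩ f ⁻¹' K, inter_subset_left, hP.inter (hK.preimage hf), fun h => ?_,
    (image_inter_preimage f _ K).symm ▸ hPK⟩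
  exact hunc' (image_inter_preimage f _ K ▸ h.image f)

end Fibers

end SorgenfreyLine

open SorgenfreyLine

/-- If a T1 regular space `X` with uncountable weight (i.e. not second countable) is a
continuous open image of the Sorgenfrey line, then `X` has a closed subset homeomorphic to the
Sorgenfrey line. -/
theorem stmt4 {X : Type} [TopologicalSpace X] [T1Space X] [RegularSpace X] (f : 𝕊 → X)
    (hf : Continuous f) (hopen : IsOpenMap f) (hsurj : Surjective f)
    (hw : ¬ SecondCountableTopology X) :
    ∃ C : Set X, IsClosed C ∧ Nonempty (C ≃ₜ 𝕊) := by
  have := hsurj.hereditarilyLindelofSpace hf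
  obtain ⟨c, q, hunc⟩ := exists_not_countable_fiberUniqueIn hf hopen hsurj hw
  have hWo := isOpen_Ico (c : 𝕊) q
  obtain ⟨B, hBP, hBc, hBunc, hfB⟩ :=
    exists_isClosed_not_countable_isClosed_image hf hopen hWo (isClosed_Ico _ _) hunc
  obtain ⟨D, hD, hDne, hDB⟩ :=
    HereditarilyLindelofSpace.exists_perfect_nonempty_of_isClosed_of_not_countable hBc hBunc
  have hDP := hDB.trans hBP
  obtain ⟨e⟩ := nonempty_homeomorph_of_perfect hD hDne ⟨c, fun _ hx => (hDP hx).1.1⟩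
  exact ⟨f '' D, isClosed_image_of_subset_fiberUniqueIn hopen hWo hBP hfB hD.closed hDB,
    ⟨(homeomorphImage hf hopen hWo hDP).symm.trans e⟩⟩
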